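/- arXiv:math/0607304 — 3 statements merged into one kernel-verified Lean document; each statement's English description precedes it below -/
import Mathlib

section
/- Let z be a dyadic rational in (0,1) with level ≥ 1, and let l^k(z) be a point on its left path with ℓ(l^k(z)) ≥ 1. Let m be minimal such that ℓ(r^m(z)) < ℓ(l^k(z)). Then r(l^k(z)) = r^m(z). -/
/-- A rational is dyadic if it can be written as `k / 2^n`. -/
def IsDyadic (q : ℚ) : Prop := ∃ (k : ℤ) (n : ℕ), q = (k : ℚ) / 2 ^ n

/-- Membership in `Z`, the set of dyadic rationals of `[0,1]`. -/
def InZ (q : ℚ) : Prop := 0 ≤ q ∧ q ≤ 1 ∧ IsDyadic q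

/-- The level of a dyadic rational: the least `n` with `q = k / 2^n` for some
integer `k`.  The endpoints `0` and `1` have level `0`. -/
noncomputable def level (q : ℚ) : ℕ := sInf {n : ℕ | ∃ k : ℤ, q = (k : ℚ) / 2 ^ n}

/-- The left neighbor `l(z) = (k-1)/2^n` of `z = k/2^n` (in lowest terms,
`k` odd, `n ≥ 1`); points of level `0` are fixed. -/
noncomputable def lnb (q : ℚ) : ℚ :=
  if level q = 0 then q else q - (1 / 2 : ℚ) ^ level q

/-- The right neighbor `r(z) = (k+1)/2^n` of `z = k/2^n` (in lowest terms,
`k` odd, `n ≥ 1`); points of level `0` are fixed. -/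
noncomputable def rnb (q : ℚ) : ℚ :=
  if level q = 0 then q else q + (1 / 2 : ℚ) ^ level q

lemma level_le (k : ℤ) (n : ℕ) : level ((k:ℚ)/2^n) ≤ n := Nat.sInf_le ⟨k, rfl⟩

lemma level_int (k : ℤ) : level (k:ℚ) = 0 := by
  have h : level (k:ℚ) ≤ 0 := Nat.sInf_le ⟨k, by simp⟩
  omega

lemma scale (c : ℤ) (j n : ℕ) (h : j ≤ n) :
    (((2^j * c : ℤ) : ℚ))/2^n = (c:ℚ)/2^(n-j) := by
  have h2 : (2:ℚ)^n = 2^j * 2^(n-j) := by rw [← pow_add]; congr 1; omega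
  push_cast
  rw [h2, mul_div_mul_left _ _ (by positivity)]

lemma level_eq (a : ℤ) (n : ℕ) (ha : Odd a) : level ((a:ℚ)/2^n) = n := by
  refine le_antisymm (level_le a n) ?_
  by_contra h
  push_neg at h
  have hne : {m : ℕ | ∃ k : ℤ, (a:ℚ)/2^n = (k:ℚ)/2^m}.Nonempty := ⟨n, a, rfl⟩
  obtain ⟨c, hc⟩ := Nat.sInf_mem hne
  set d := level ((a:ℚ)/2^n) with hd
  have hq : (a:ℚ) * 2^d = c * 2^n := by
    rw [div_eq_div_iff (by positivity) (by positivity)] at hc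
    exact hc
  have hzq : a * 2^d = c * 2^n := by exact_mod_cast hq
  have h2 : (2:ℤ)^n = 2^(n-d) * 2^d := by rw [← pow_add]; congr 1; omega
  have ha2 : a = c * 2^(n-d) := by
    have : a * 2^d = c * 2^(n-d) * 2^d := by rw [hzq, h2]; ring
    exact mul_right_cancel₀ (by positivity) this
  have : (2:ℤ) ∣ a := by
    refine ⟨c * 2^(n-d-1), ?_⟩
    rw [ha2]
    have : (2:ℤ)^(n-d) = 2 * 2^(n-d-1) := by
      rw [← pow_succ']; congr 1; omega
    rw [this]; ring
  exact (Int.not_even_iff_odd.mpr ha) (even_iff_two_dvd.mpr this)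

lemma exists_rep {q : ℚ} (h : IsDyadic q) (h1 : 1 ≤ level q) :
    ∃ a : ℤ, Odd a ∧ q = (a:ℚ)/2^(level q) := by
  obtain ⟨k, n, hkn⟩ := h
  have hne : {m : ℕ | ∃ c : ℤ, q = (c:ℚ)/2^m}.Nonempty := ⟨n, k, hkn⟩
  obtain ⟨a, ha⟩ := Nat.sInf_mem hne
  rcases Int.even_or_odd a with he | ho
  · obtain ⟨c, hc⟩ := he
    exfalso
    have hq : q = ((2^1 * c : ℤ):ℚ)/2^(level q) := by
      rw [show ((2^1 * c : ℤ)) = a by omega]; exact ha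
    have h2 : q = (c:ℚ)/2^(level q - 1) :=
      hq.trans (scale c 1 (level q) (by omega))
    have h3 : level q ≤ level q - 1 := Nat.sInf_le ⟨c, h2⟩
    omega
  · exact ⟨a, ho, ha⟩

lemma rnb_eq (a : ℤ) (n : ℕ) (ha : Odd a) (hn : 1 ≤ n) :
    rnb ((a:ℚ)/2^n) = (((a+1:ℤ)):ℚ)/2^n := by
  unfold rnb
  rw [level_eq a n ha, if_neg (by omega)]
  have h2 : ((1:ℚ)/2)^n = 1/2^n := by rw [div_pow, one_pow]
  rw [h2]
  push_cast
  field_simp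

lemma lnb_eq (a : ℤ) (n : ℕ) (ha : Odd a) (hn : 1 ≤ n) :
    lnb ((a:ℚ)/2^n) = (((a-1:ℤ)):ℚ)/2^n := by
  unfold lnb
  rw [level_eq a n ha, if_neg (by omega)]
  have h2 : ((1:ℚ)/2)^n = 1/2^n := by rw [div_pow, one_pow]
  rw [h2]
  push_cast
  field_simp

lemma lnb_of_level0 {q : ℚ} (h : level q = 0) : lnb q = q := if_pos h
lemma rnb_of_level0 {q : ℚ} (h : level q = 0) : rnb q = q := if_pos h

lemma isDyadic_lnb {q : ℚ} (h : IsDyadic q) : IsDyadic (lnb q) := by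
  rcases Nat.eq_zero_or_pos (level q) with h0 | h1
  · rw [lnb_of_level0 h0]; exact h
  · obtain ⟨a, ho, hq⟩ := exists_rep h h1
    rw [hq, lnb_eq a _ ho h1]
    exact ⟨a - 1, level q, rfl⟩

lemma isDyadic_iter_lnb {z : ℚ} (h : IsDyadic z) (k : ℕ) : IsDyadic (lnb^[k] z) := by
  induction k with
  | zero => simpa using h
  | succ k ih => rw [Function.iterate_succ_apply']; exact isDyadic_lnb ih

lemma int_two_pow_odd (x : ℤ) (hx : x ≠ 0) : ∃ v : ℕ, ∃ b : ℤ, Odd b ∧ x = 2 ^ v * b := by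
  obtain ⟨v, m, hm, he⟩ := Nat.exists_eq_two_pow_mul_odd (n := x.natAbs)
    (by simpa using hx)
  rcases Int.natAbs_eq x with h | h
  · exact ⟨v, (m : ℤ), by exact_mod_cast hm, by rw [h, he]; push_cast; ring⟩
  · exact ⟨v, -(m : ℤ), by simpa using (Int.odd_coe_nat m).mpr hm |>.neg,
      by rw [h, he]; push_cast; ring⟩

lemma r_level (b : ℤ) (n v : ℕ) (hb : Odd b) (hvn : v < n) (j : ℕ)
    (h1 : 1 ≤ j) (h2 : j < v) :
    level (((2^v*b + 2^j : ℤ) : ℚ)/2^n) = n - j := by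
  have key1 : (2^v*b + 2^j : ℤ) = 2^j * (2^(v-j)*b + 1) := by
    have h : (2:ℤ)^v = 2^j * 2^(v-j) := by rw [← pow_add]; congr 1; omega
    rw [h]; ring
  have hodd : Odd (2^(v-j)*b + 1 : ℤ) := ⟨2^(v-j-1)*b, by
    have h : (2:ℤ)^(v-j) = 2*2^(v-j-1) := by rw [← pow_succ']; congr 1; omega
    rw [h]; ring⟩
  rw [key1, scale _ j n (by omega), level_eq _ _ hodd]

lemma r_iter (b : ℤ) (n v : ℕ) (hb : Odd b) (hv : 1 ≤ v) (hvn : v < n) :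
    ∀ j, 1 ≤ j → j ≤ v →
      rnb^[j] (((2^v*b + 1 : ℤ):ℚ)/2^n) = (((2^v*b + 2^j : ℤ)):ℚ)/2^n := by
  intro j
  induction j with
  | zero => omega
  | succ j ih =>
    intro _ hjv
    rcases Nat.eq_zero_or_pos j with h0 | h1
    · subst h0
      rw [Function.iterate_one]
      have hodd : Odd (2^v*b + 1 : ℤ) := ⟨2^(v-1)*b, by
        have h : (2:ℤ)^v = 2*2^(v-1) := by rw [← pow_succ']; congr 1; omega
        rw [h]; ring⟩
      rw [rnb_eq _ n hodd (by omega)]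
      push_cast
      ring_nf
    · rw [Function.iterate_succ_apply', ih h1 (by omega)]
      have key1 : (2^v*b + 2^j : ℤ) = 2^j * (2^(v-j)*b + 1) := by
        have h : (2:ℤ)^v = 2^j * 2^(v-j) := by rw [← pow_add]; congr 1; omega
        rw [h]; ring
      have hodd : Odd (2^(v-j)*b + 1 : ℤ) := ⟨2^(v-j-1)*b, by
        have h : (2:ℤ)^(v-j) = 2*2^(v-j-1) := by rw [← pow_succ']; congr 1; omega
        rw [h]; ring⟩
      rw [key1, scale _ j n (by omega), rnb_eq _ _ hodd (by omega)]
      rw [show (2^v*b + 2^(j+1) : ℤ) = 2^j * (2^(v-j)*b + 1 + 1) from by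
        have h : (2:ℤ)^v = 2^j * 2^(v-j) := by rw [← pow_add]; congr 1; omega
        have h2 : (2:ℤ)^(j+1) = 2^j * 2 := by rw [pow_succ]
        rw [h, h2]; ring]
      rw [scale _ j n (by omega)]

lemma main (z : ℚ) (hdz : IsDyadic z) (hlz : 1 ≤ level z) :
    ∀ k : ℕ, 1 ≤ level (lnb^[k] z) →
    ∃ t : ℕ, (∀ j, j < t → level (lnb^[k] z) ≤ level (rnb^[j] z)) ∧
      level (rnb^[t] z) < level (lnb^[k] z) ∧ rnb (lnb^[k] z) = rnb^[t] z := by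
  intro k
  induction k with
  | zero =>
    intro _
    obtain ⟨a, hao, hza⟩ := exists_rep hdz hlz
    obtain ⟨c, hc⟩ := id hao
    have e1 : rnb z = ((a+1:ℤ):ℚ)/2^(level z) := by
      conv_lhs => rw [hza]
      exact rnb_eq a _ hao hlz
    have e2 : rnb z = ((c+1:ℤ):ℚ)/2^(level z - 1) := by
      rw [e1, show (a+1:ℤ) = 2^1*(c+1) from by omega, scale _ 1 _ hlz]
    refine ⟨1, ?_, ?_, ?_⟩
    · intro j hj
      interval_cases j
      simp
    · simp only [Function.iterate_zero_apply, Function.iterate_one]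
      rw [e2]
      have := level_le (c+1) (level z - 1)
      omega
    · simp
  | succ k ih =>
    intro hk1
    have hlwub : lnb^[k+1] z = lnb (lnb^[k] z) := Function.iterate_succ_apply' lnb k z
    have hk0 : 1 ≤ level (lnb^[k] z) := by
      by_contra h
      push_neg at h
      have h0 : level (lnb^[k] z) = 0 := by omega
      rw [hlwub, lnb_of_level0 h0] at hk1
      omega
    obtain ⟨t, hA, hB, hC⟩ := ih hk0
    have hdw : IsDyadic (lnb^[k] z) := isDyadic_iter_lnb hdz k
    obtain ⟨a, hao, hwa⟩ := exists_rep hdw hk0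
    set n' := level (lnb^[k] z) with hn'
    have hlnb1 : lnb (lnb^[k] z) = ((a-1:ℤ):ℚ)/2^n' := by
      conv_lhs => rw [hwa]
      exact lnb_eq a _ hao hk0
    have ha1 : a - 1 ≠ 0 := by
      intro h
      have h2 : lnb (lnb^[k] z) = ((0:ℤ):ℚ) := by rw [hlnb1, h]; simp
      rw [hlwub, h2, level_int] at hk1
      omega
    obtain ⟨v, b, hob, hdec⟩ := int_two_pow_odd (a-1) ha1
    have hv1 : 1 ≤ v := by
      by_contra h
      push_neg at h
      interval_cases v
      · simp at hdec
        obtain ⟨x, hx⟩ := hao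
        obtain ⟨y, hy⟩ := hob
        omega
    have hlnb2 : lnb (lnb^[k] z) = ((2^v*b : ℤ):ℚ)/2^n' := by rw [hlnb1, hdec]
    have hvn : v < n' := by
      by_contra h
      push_neg at h
      have h2 : lnb (lnb^[k] z) = ((2^(v-n')*b : ℤ):ℚ) := by
        rw [hlnb2, show (2^v*b:ℤ) = 2^(n') * (2^(v-n')*b) from by
          rw [show (2:ℤ)^v = 2^(n')*2^(v-n') from by rw [← pow_add]; congr 1; omega]; ring,
          scale _ n' n' le_rfl]
        simp
      rw [hlwub, h2, level_int] at hk1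
      omega
    have hlnb3 : lnb (lnb^[k] z) = ((b : ℤ):ℚ)/2^(n'-v) := by
      rw [hlnb2, scale b v n' (by omega)]
    have hp' : level (lnb^[k+1] z) = n' - v := by
      rw [hlwub, hlnb3]; exact level_eq b _ hob
    have hwa2 : lnb^[k] z = ((2^v*b + 1 : ℤ):ℚ)/2^n' := by
      rw [hwa, show a = 2^v*b+1 from by omega]
    have hshift : ∀ i : ℕ, rnb^[i+1] (lnb^[k] z) = rnb^[i+t] z := by
      intro i
      rw [Function.iterate_succ_apply, hC, ← Function.iterate_add_apply]
    obtain ⟨c, hc⟩ := id hob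
    have hfin : rnb^[v] (lnb^[k] z) = ((c+1:ℤ):ℚ)/2^(n'-v-1) := by
      rw [hwa2, r_iter b n' v hob hv1 hvn v hv1 le_rfl,
        show (2^v*b + 2^v : ℤ) = 2^(v+1)*(c+1) from by
          rw [show (2:ℤ)^(v+1) = 2^v*2 from pow_succ 2 v]
          linear_combination (2:ℤ)^v * hc,
        scale _ (v+1) n' (by omega),
        show n' - (v+1) = n' - v - 1 from by omega]
    have hlev_fin : level (rnb^[v] (lnb^[k] z)) < n' - v := by
      rw [hfin]
      have := level_le (c+1) (n'-v-1)
      omega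
    have hrlnb : rnb (lnb^[k+1] z) = rnb^[v] (lnb^[k] z) := by
      rw [hlwub, hlnb3, rnb_eq b _ hob (by omega), hfin,
        show (b+1:ℤ) = 2^1*(c+1) from by omega,
        scale _ 1 (n'-v) (by omega)]
    refine ⟨v - 1 + t, ?_, ?_, ?_⟩
    · intro j hj
      rcases lt_or_ge j t with h | h
      · have h2 : level (lnb^[k+1] z) ≤ n' := by rw [hp']; omega
        exact le_trans h2 (hA j h)
      · have hj2 : rnb^[j] z = rnb^[(j-t)+1] (lnb^[k] z) := by
          rw [hshift (j-t)]
          congr 1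
          omega
        rw [hj2, hwa2, r_iter b n' v hob hv1 hvn (j-t+1) (by omega) (by omega),
          r_level b n' v hob hvn (j-t+1) (by omega) (by omega), hp']
        omega
    · have h2 : rnb^[v-1+t] z = rnb^[v] (lnb^[k] z) := by
        rw [← hshift (v-1)]
        congr 1
        omega
      rw [h2, hp']
      exact hlev_fin
    · rw [hrlnb, ← hshift (v-1)]
      congr 1
      omega

/-- Fact 2: if `l^k(z)` is on the left path of `z` with `ℓ(l^k(z)) ≥ 1` and `m`
is minimal with `ℓ(r^m(z)) < ℓ(l^k(z))`, then `r(l^k(z)) = r^m(z)`. -/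
theorem right_of_left_path (z : ℚ) (hz : InZ z) (hlz : 1 ≤ level z)
    (k : ℕ) (hk : 1 ≤ level (lnb^[k] z))
    (m : ℕ) (hm : level (rnb^[m] z) < level (lnb^[k] z))
    (hmin : ∀ j : ℕ, j < m → level (lnb^[k] z) ≤ level (rnb^[j] z)) :
    rnb (lnb^[k] z) = rnb^[m] z := by
  have hdz : IsDyadic z := hz.2.2
  obtain ⟨t, hA, hB, hC⟩ := main z hdz hlz k hk
  have hmt : m = t := by
    rcases lt_trichotomy m t with h | h | h
    · exact absurd (hA m h) (by omega)
    · exact h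
    · exact absurd (hmin t h) (by omega)
  rw [hC, hmt]
end

section
/- Fix a ∈ (0, 1/2). Define ρ on the dyadic rationals of [0,1] by: ρ(0,1) = 1; for z < z' (not the pair {0,1}), ρ(z,z') is the sum of the edge lengths along the V-shaped path z, r(z), …, r^k(z) = l^s(z'), …, l(z'), z', where each edge {w, l(w)} or {w, r(w)} with ℓ(w) = n has length a^n. Then for every z of level n ≥ 1, ρ(z,0) + ρ(z,1) = τ_n, where τ_n = a + a² + ⋯ + a^{n-1} + 2a^n. -/
/-- `ρ` is the V-path quasi-metric on the dyadic rationals of `[0,1]` with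
parameter `a`: it is symmetric, vanishes on the diagonal, is nonnegative on
`Z`, satisfies `ρ(0,1) = 1`, and decomposes along the unique V-shaped path:
for `z < z'` in `Z` the first edge taken from the higher-level endpoint has
length `a^level`. These properties characterize the sum of edge lengths
`a^{ℓ(w)}` along the V-shaped path joining `z` and `z'`. -/
def IsVPath (a : ℝ) (ρ : ℚ → ℚ → ℝ) : Prop :=
  (∀ z z', ρ z z' = ρ z' z) ∧
  (∀ z, ρ z z = 0) ∧
  (∀ z z', InZ z → InZ z' → 0 ≤ ρ z z') ∧
  ρ 0 1 = 1 ∧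
  (∀ z z', InZ z → InZ z' → z < z' → 1 ≤ level z → level z' ≤ level z →
    ρ z z' = a ^ level z + ρ (rnb z) z') ∧
  (∀ z z', InZ z → InZ z' → z < z' → level z < level z' →
    ρ z z' = ρ z (lnb z') + a ^ level z')

/-- `τ_n = a + a² + ⋯ + a^{n-1} + 2 a^n`. -/
noncomputable def tau (a : ℝ) (n : ℕ) : ℝ :=
  (∑ i ∈ Finset.Ico 1 n, a ^ i) + 2 * a ^ n

/-!
Write `z = k / 2^(n+1)` with `k` odd. The V-paths from `z` to `0` and to `1` start with the edges
to `l(z)` and to `r(z)`, so `ρ(z,0) + ρ(z,1) = ρ(l z, 0) + ρ(r z, 1) + 2aⁿ⁺¹`. One of `l(z)`, `r(z)`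
is the parent `w` of `z`, of level `n`, and the other is the neighbour of `w` on the same side
(`l w = l z` or `r w = r z`), so `ρ(l z, 0) + ρ(r z, 1) = ρ(l w, 0) + ρ(r w, 1) + aⁿ`; by induction
this is `a + ⋯ + aⁿ`.
-/

open Finset

lemma level_le_of_eq_div (q : ℚ) (k : ℤ) (n : ℕ) (h : q = k / 2 ^ n) : level q ≤ n :=
  Nat.sInf_le ⟨k, h⟩

lemma level_intCast (k : ℤ) : level (k : ℚ) = 0 :=
  Nat.le_zero.mp (level_le_of_eq_div _ k 0 (by simp))

lemma level_zero : level 0 = 0 := by exact_mod_cast level_intCast 0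

lemma level_one : level 1 = 0 := by exact_mod_cast level_intCast 1

lemma level_odd_div_two_pow {k : ℤ} (hk : Odd k) (n : ℕ) : level (k / 2 ^ n) = n := by
  refine le_antisymm (level_le_of_eq_div _ k n rfl) (le_csInf ⟨n, k, rfl⟩ ?_)
  rintro m ⟨k', hm⟩
  by_contra! hmn
  have hkk : k = k' * 2 ^ (n - m) := by
    have : (k : ℚ) = k' * 2 ^ (n - m) := by
      rw [pow_sub₀ _ two_ne_zero hmn.le]
      field_simp at hm ⊢
      linarith
    exact_mod_cast this
  exact Int.not_even_iff_odd.mpr hk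
    (hkk ▸ (Int.even_pow.mpr ⟨even_two, by omega⟩).mul_left k')

lemma IsDyadic.exists_eq_div_two_pow_level {q : ℚ} (hq : IsDyadic q) :
    ∃ k : ℤ, q = k / 2 ^ level q := by
  obtain ⟨k, n, h⟩ := hq
  exact Nat.sInf_mem (s := {n : ℕ | ∃ k : ℤ, q = k / 2 ^ n}) ⟨n, k, h⟩

lemma IsDyadic.exists_odd_eq_div {q : ℚ} (hq : IsDyadic q) (hl : level q ≠ 0) :
    ∃ k : ℤ, Odd k ∧ q = k / 2 ^ level q := by
  obtain ⟨k, hk⟩ := hq.exists_eq_div_two_pow_level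
  refine ⟨k, Int.not_even_iff_odd.mp ?_, hk⟩
  rintro ⟨t, rfl⟩
  obtain ⟨n, hn⟩ := Nat.exists_eq_succ_of_ne_zero hl
  have : q = t / 2 ^ n := by
    rw [hk, hn, pow_succ]
    push_cast
    field_simp
    ring
  have := level_le_of_eq_div q t n this
  omega

lemma lnb_odd_div {k : ℤ} (hk : Odd k) {n : ℕ} (hn : n ≠ 0) :
    lnb (k / 2 ^ n) = (k - 1) / 2 ^ n := by
  rw [lnb, level_odd_div_two_pow hk, if_neg hn, one_div_pow]
  ring

lemma rnb_odd_div {k : ℤ} (hk : Odd k) {n : ℕ} (hn : n ≠ 0) :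
    rnb (k / 2 ^ n) = (k + 1) / 2 ^ n := by
  rw [rnb, level_odd_div_two_pow hk, if_neg hn, one_div_pow]
  ring

lemma inZ_div_two_pow_iff {k : ℤ} {n : ℕ} : InZ (k / 2 ^ n) ↔ 0 ≤ k ∧ k ≤ 2 ^ n := by
  have hpos : (0 : ℚ) < 2 ^ n := by positivity
  rw [InZ, le_div_iff₀ hpos, zero_mul, div_le_one hpos]
  exact ⟨fun h ↦ ⟨by exact_mod_cast h.1, by exact_mod_cast h.2.1⟩,
    fun h ↦ ⟨by exact_mod_cast h.1, by exact_mod_cast h.2, k, n, rfl⟩⟩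

lemma InZ.exists_odd_eq_div {z : ℚ} (hz : InZ z) {n : ℕ} (hl : level z = n + 1) :
    ∃ k : ℤ, Odd k ∧ 0 < k ∧ k < 2 ^ (n + 1) ∧ z = k / 2 ^ (n + 1) := by
  obtain ⟨k, ⟨t, rfl⟩, hkz⟩ := hz.2.2.exists_odd_eq_div (by omega)
  rw [hl] at hkz
  subst hkz
  obtain ⟨h0, h1⟩ := inZ_div_two_pow_iff.mp hz
  refine ⟨_, ⟨t, rfl⟩, by omega, ?_, rfl⟩
  rw [pow_succ] at h1 ⊢
  omega

lemma lnb_rnb_of_level_eq_one {z : ℚ} (hz : InZ z) (hl : level z = 1) : lnb z = 0 ∧ rnb z = 1 := by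
  obtain ⟨k, hk, hk0, hk1, rfl⟩ := hz.exists_odd_eq_div (n := 0) hl
  obtain rfl : k = 1 := by norm_num at hk1; omega
  rw [lnb_odd_div odd_one (n := 0 + 1) one_ne_zero, rnb_odd_div odd_one (n := 0 + 1) one_ne_zero]
  norm_num

lemma inZ_zero : InZ 0 := ⟨le_rfl, zero_le_one, 0, 0, by simp⟩

lemma inZ_one : InZ 1 := ⟨zero_le_one, le_rfl, 1, 0, by simp⟩

lemma InZ.pos {z : ℚ} (hz : InZ z) (hl : level z ≠ 0) : 0 < z :=
  hz.1.lt_of_ne (by rintro rfl; exact hl level_zero)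

lemma InZ.lt_one {z : ℚ} (hz : InZ z) (hl : level z ≠ 0) : z < 1 :=
  hz.2.1.lt_of_ne (by rintro rfl; exact hl level_one)

lemma inZ_lnb {z : ℚ} (hz : InZ z) : InZ (lnb z) := by
  by_cases hl : level z = 0
  · rwa [lnb, if_pos hl]
  obtain ⟨n, hn⟩ := Nat.exists_eq_succ_of_ne_zero hl
  obtain ⟨k, hk, hk0, hk1, rfl⟩ := hz.exists_odd_eq_div hn
  rw [lnb_odd_div hk n.succ_ne_zero]
  exact_mod_cast inZ_div_two_pow_iff.mpr ⟨by omega, by omega⟩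

lemma inZ_rnb {z : ℚ} (hz : InZ z) : InZ (rnb z) := by
  by_cases hl : level z = 0
  · rwa [rnb, if_pos hl]
  obtain ⟨n, hn⟩ := Nat.exists_eq_succ_of_ne_zero hl
  obtain ⟨k, hk, hk0, hk1, rfl⟩ := hz.exists_odd_eq_div hn
  rw [rnb_odd_div hk n.succ_ne_zero]
  exact_mod_cast inZ_div_two_pow_iff.mpr ⟨by omega, by omega⟩

lemma exists_parent {z : ℚ} (hz : InZ z) {n : ℕ} (hl : level z = n + 2) :
    ∃ w, level w = n + 1 ∧
      ((lnb z = w ∧ rnb w = rnb z) ∨ (rnb z = w ∧ lnb w = lnb z)) := by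
  obtain ⟨_, ⟨m, rfl⟩, -, -, rfl⟩ := hz.exists_odd_eq_div hl
  rw [lnb_odd_div ⟨m, rfl⟩ (by omega), rnb_odd_div ⟨m, rfl⟩ (by omega)]
  have hnb : (((2 * m + 1 : ℤ) : ℚ) - 1) / 2 ^ (n + 2) = m / 2 ^ (n + 1) ∧
      (((2 * m + 1 : ℤ) : ℚ) + 1) / 2 ^ (n + 2) = ((m + 1 : ℤ) : ℚ) / 2 ^ (n + 1) := by
    constructor <;> (push_cast; rw [pow_succ _ (n + 1)]; field_simp; ring)
  rw [hnb.1, hnb.2]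
  rcases Int.even_or_odd m with hm | hm
  · have hm1 : Odd (m + 1) := hm.add_one
    refine ⟨_, level_odd_div_two_pow hm1 _, Or.inr ⟨rfl, ?_⟩⟩
    rw [lnb_odd_div hm1 (by omega)]
    push_cast
    ring
  · refine ⟨_, level_odd_div_two_pow hm _, Or.inl ⟨rfl, ?_⟩⟩
    rw [rnb_odd_div hm (by omega)]
    push_cast
    ring

namespace IsVPath

variable {a : ℝ} {ρ : ℚ → ℚ → ℝ}

lemma dist_zero_eq (hρ : IsVPath a ρ) {z : ℚ} (hz : InZ z) (hl : level z ≠ 0) :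
    ρ z 0 = ρ (lnb z) 0 + a ^ level z := by
  obtain ⟨hsymm, -, -, -, -, hleft⟩ := hρ
  rw [hsymm, hleft 0 z inZ_zero hz (hz.pos hl) (by rw [level_zero]; omega), hsymm]

lemma dist_one_eq (hρ : IsVPath a ρ) {z : ℚ} (hz : InZ z) (hl : level z ≠ 0) :
    ρ z 1 = a ^ level z + ρ (rnb z) 1 := by
  obtain ⟨-, -, -, -, hright, -⟩ := hρ
  exact hright z 1 hz inZ_one (hz.lt_one hl) (by omega) (by rw [level_one]; omega)

lemma dist_lnb_zero_add_dist_rnb_one (hρ : IsVPath a ρ) {z : ℚ} (hz : InZ z) {n : ℕ}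
    (hl : level z = n + 1) : ρ (lnb z) 0 + ρ (rnb z) 1 = ∑ i ∈ Ico 1 (n + 1), a ^ i := by
  induction n generalizing z with
  | zero =>
    obtain ⟨hl0, hr1⟩ := lnb_rnb_of_level_eq_one hz hl
    simp [hl0, hr1, hρ.2.1]
  | succ n ih =>
    rw [sum_Ico_succ_top (by omega)]
    obtain ⟨w, hw, ⟨rfl, hrw⟩ | ⟨rfl, hlw⟩⟩ := exists_parent hz hl
    · rw [← hrw, hρ.dist_zero_eq (inZ_lnb hz) (by omega), hw]
      linear_combination ih (inZ_lnb hz) hw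
    · rw [← hlw, hρ.dist_one_eq (inZ_rnb hz) (by omega), hw]
      linear_combination ih (inZ_rnb hz) hw

end IsVPath

theorem vpath_tent_sum_general (a : ℝ)
    (ρ : ℚ → ℚ → ℝ) (hρ : IsVPath a ρ)
    (z : ℚ) (hz : InZ z) (hl : 1 ≤ level z) :
    ρ z 0 + ρ z 1 = tau a (level z) := by
  obtain ⟨n, hn⟩ := Nat.exists_eq_add_of_le' hl
  rw [hρ.dist_zero_eq hz (by omega), hρ.dist_one_eq hz (by omega), tau, hn,
    ← hρ.dist_lnb_zero_add_dist_rnb_one hz hn]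
  ring

/-- Fact 4: for the V-path quasi-metric with parameter `a ∈ (0,1/2)` and any
`z ∈ Z` of level `n ≥ 1`, `ρ(z,0) + ρ(z,1) = τ_n`. -/
theorem vpath_tent_sum (a : ℝ) (ha0 : 0 < a) (ha : a < 1 / 2)
    (ρ : ℚ → ℚ → ℝ) (hρ : IsVPath a ρ)
    (z : ℚ) (hz : InZ z) (hl : 1 ≤ level z) :
    ρ z 0 + ρ z 1 = tau a (level z) :=
  vpath_tent_sum_general a ρ hρ z hz hl
end

section
/- Fix a ∈ (0,1/2). The V-path quasi-metric ρ on the dyadic rationals of [0,1] is a K-quasi-metric with K = 2(1-a)/a; i.e., ρ(z,z'') ≤ K·max{ρ(z,z'), ρ(z',z'')} for all z, z', z''. -/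
/-!
A right step `x ↦ x + 2^{-level x}` (and a left step `y ↦ y - 2^{-level y}`) strictly lowers
the level, and the V-path from `x` to `y` climbs by right steps from `x` and by left steps
from `y` to the point of lowest level in `[x, y]`.  Hence a climb inside a cell of the grid
`2⁻ᵉℤ` costs at most `a^{e+1} + a^{e+2} + ⋯ ≤ a^e`, while an interior point of such a cell is
at total distance at least `a^{e+1}/(1 - a)` from its two ends.  The first bound makes `ρ`
monotone under inclusion of intervals, which handles a middle point outside `[z, z'']`.
Otherwise the path from `z` to `z''` shares all but one edge, of length `a^m` next to an
apex of level `m`, with the paths through `z'`, and the second bound charges that edge to the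
detour through `z'` at rate `(1 - a)/a`.  The reflection `q ↦ 1 - q` preserves the axioms,
which gives every statement its mirror image.
-/

def OnGrid (n : ℕ) (q : ℚ) : Prop := ∃ k : ℤ, q = k / 2 ^ n

namespace OnGrid

variable {n m : ℕ} {p q : ℚ}

theorem zero (n : ℕ) : OnGrid n 0 := ⟨0, by simp⟩

theorem isDyadic (h : OnGrid n q) : IsDyadic q :=
  let ⟨k, hk⟩ := h; ⟨k, n, hk⟩

theorem mono (h : OnGrid n q) (hnm : n ≤ m) : OnGrid m q := by
  obtain ⟨k, rfl⟩ := h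
  obtain ⟨d, rfl⟩ := Nat.exists_eq_add_of_le hnm
  exact ⟨k * 2 ^ d, by rw [pow_add]; push_cast; field_simp⟩

theorem add_half_pow (h : OnGrid n q) : OnGrid n (q + (1 / 2) ^ n) := by
  obtain ⟨k, rfl⟩ := h
  exact ⟨k + 1, by rw [one_div_pow]; push_cast; field_simp⟩

theorem sub_half_pow (h : OnGrid n q) : OnGrid n (q - (1 / 2) ^ n) := by
  obtain ⟨k, rfl⟩ := h
  exact ⟨k - 1, by rw [one_div_pow]; push_cast; field_simp⟩

theorem one_sub (h : OnGrid n q) : OnGrid n (1 - q) := by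
  obtain ⟨k, rfl⟩ := h
  exact ⟨2 ^ n - k, by push_cast; field_simp⟩

theorem add_half_pow_le (hp : OnGrid n p) (hq : OnGrid n q) (hpq : p < q) :
    p + (1 / 2) ^ n ≤ q := by
  obtain ⟨k, rfl⟩ := hp
  obtain ⟨j, rfl⟩ := hq
  have h2 : (0 : ℚ) < 2 ^ n := by positivity
  have hkj : k + 1 ≤ j := by exact_mod_cast (div_lt_div_iff_of_pos_right h2).mp hpq
  rw [one_div_pow, ← add_div, div_le_div_iff_of_pos_right h2]
  exact_mod_cast hkj

end OnGrid

theorem level_le_s18 {n : ℕ} {q : ℚ} (h : OnGrid n q) : level q ≤ n := Nat.sInf_le h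

theorem onGrid_level {q : ℚ} (h : IsDyadic q) : OnGrid (level q) q := by
  obtain ⟨k, n, hk⟩ := h
  exact Nat.sInf_mem (s := {n : ℕ | ∃ k : ℤ, q = (k : ℚ) / 2 ^ n}) ⟨n, k, hk⟩

theorem lt_level_of_lt_of_lt {n : ℕ} {p x : ℚ} (hp : OnGrid n p) (hx : IsDyadic x)
    (h₁ : p < x) (h₂ : x < p + (1 / 2) ^ n) : n < level x := by
  by_contra! h
  linarith [hp.add_half_pow_le ((onGrid_level hx).mono h) h₁]

theorem level_one_sub {q : ℚ} (h : IsDyadic q) : level (1 - q) = level q :=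
  le_antisymm (level_le_s18 (onGrid_level h).one_sub)
    (by simpa using level_le_s18 (onGrid_level (onGrid_level h).one_sub.isDyadic).one_sub)

theorem onGrid_pred_level_add_sub {q : ℚ} (hq : IsDyadic q) (h : 1 ≤ level q) :
    OnGrid (level q - 1) (q + (1 / 2) ^ level q) ∧
      OnGrid (level q - 1) (q - (1 / 2) ^ level q) := by
  obtain ⟨m, hm⟩ : ∃ m, level q = m + 1 := ⟨level q - 1, by omega⟩
  obtain ⟨k, hk⟩ := onGrid_level hq
  rw [hm] at hk ⊢
  -- the numerator of `q` at its own level is odd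
  obtain ⟨j, rfl⟩ | ⟨j, rfl⟩ := Int.even_or_odd k
  · have := level_le_s18 (n := m) (q := q) ⟨j, by rw [hk, pow_succ]; push_cast; field_simp; ring⟩
    omega
  · rw [Nat.add_sub_cancel, hk, one_div_pow, pow_succ]
    exact ⟨⟨j + 1, by push_cast; field_simp; ring⟩, ⟨j, by push_cast; field_simp; ring⟩⟩

theorem level_add_half_pow_lt {q : ℚ} (hq : IsDyadic q) (h : 1 ≤ level q) :
    level (q + (1 / 2) ^ level q) < level q := by
  have := level_le_s18 (onGrid_pred_level_add_sub hq h).1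
  omega

theorem level_sub_half_pow_lt {q : ℚ} (hq : IsDyadic q) (h : 1 ≤ level q) :
    level (q - (1 / 2) ^ level q) < level q := by
  have := level_le_s18 (onGrid_pred_level_add_sub hq h).2
  omega

theorem rnb_eq_s18 {q : ℚ} (h : 1 ≤ level q) : rnb q = q + (1 / 2) ^ level q := by
  rw [rnb, if_neg (by omega)]

theorem lnb_eq_s18 {q : ℚ} (h : 1 ≤ level q) : lnb q = q - (1 / 2) ^ level q := by
  rw [lnb, if_neg (by omega)]

namespace InZ

variable {n : ℕ} {p q x : ℚ}

theorem one : InZ 1 := ⟨zero_le_one, le_rfl, 1, 0, by simp⟩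

theorem of_onGrid (hp : InZ p) (hq : InZ q) (hpx : p ≤ x) (hxq : x ≤ q) (hx : OnGrid n x) :
    InZ x :=
  ⟨hp.1.trans hpx, hxq.trans hq.2.1, hx.isDyadic⟩

theorem one_sub (h : InZ q) : InZ (1 - q) :=
  ⟨by linarith [h.2.1], by linarith [h.1], (onGrid_level h.2.2).one_sub.isDyadic⟩

theorem eq_zero_or_eq_one_of_level_eq_zero (hq : InZ q) (h : level q = 0) : q = 0 ∨ q = 1 := by
  obtain ⟨k, hk⟩ := onGrid_level hq.2.2
  rw [h, pow_zero, div_one] at hk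
  have h0 : 0 ≤ k := by exact_mod_cast hk ▸ hq.1
  have h1 : k ≤ 1 := by exact_mod_cast hk ▸ hq.2.1
  interval_cases k <;> simp [hk]

end InZ

def IsApex (x y u : ℚ) : Prop :=
  InZ u ∧ x ≤ u ∧ u ≤ y ∧ ∀ r, InZ r → x ≤ r → r ≤ y → level u ≤ level r

theorem exists_isApex {x y : ℚ} (hx : InZ x) (hxy : x ≤ y) : ∃ u, IsApex x y u := by
  obtain ⟨u, ⟨hu, hxu, huy⟩, hmin⟩ :=
    Nat.sInf_mem (s := level '' {r | InZ r ∧ x ≤ r ∧ r ≤ y}) ⟨level x, x, ⟨hx, le_rfl, hxy⟩, rfl⟩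
  exact ⟨u, hu, hxu, huy, fun r hr hxr hry => hmin ▸ Nat.sInf_le ⟨r, ⟨hr, hxr, hry⟩, rfl⟩⟩

/-- The neighbours `u ± 2^{-level u}` have lower level than the apex `u`, so they lie outside
`[x, y]`; only for `[x, y] = [0, 1]` can the apex be `0` or `1` and this fail. -/
theorem IsApex.sub_lt_and_lt_add {x y u : ℚ} (h : IsApex x y u) (hx : InZ x) (hy : InZ y)
    (hxy : 0 < x ∨ y < 1) : u - (1 / 2) ^ level u < x ∧ y < u + (1 / 2) ^ level u := by
  obtain ⟨hu, hxu, huy, hmin⟩ := h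
  rcases Nat.eq_zero_or_pos (level u) with h0 | h0
  · rw [h0, pow_zero]
    rcases hu.eq_zero_or_eq_one_of_level_eq_zero h0 with rfl | rfl <;> rcases hxy with hxy | hxy <;>
      constructor <;> linarith [hx.1, hy.2.1]
  have hpos : (0 : ℚ) < (1 / 2) ^ level u := by positivity
  obtain ⟨hnext, hprev⟩ := onGrid_pred_level_add_sub hu.2.2 h0
  constructor <;> by_contra! hout
  · have := hmin _ (InZ.of_onGrid hx hy hout (by linarith) hprev) hout (by linarith)
    linarith [level_sub_half_pow_lt hu.2.2 h0]
  · have := hmin _ (InZ.of_onGrid hx hy (by linarith) hout hnext) (by linarith) hout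
    linarith [level_add_half_pow_lt hu.2.2 h0]

namespace IsVPath

variable {a : ℝ} {ρ : ℚ → ℚ → ℝ} {n : ℕ} {u v w x y z z' z'' : ℚ}

theorem symm (hρ : IsVPath a ρ) (x y : ℚ) : ρ x y = ρ y x := hρ.1 x y

theorem self (hρ : IsVPath a ρ) (x : ℚ) : ρ x x = 0 := hρ.2.1 x

theorem nonneg (hρ : IsVPath a ρ) (hx : InZ x) (hy : InZ y) : 0 ≤ ρ x y := hρ.2.2.1 x y hx hy

theorem zero_one (hρ : IsVPath a ρ) : ρ 0 1 = 1 := hρ.2.2.2.1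

/-- The axioms unfold only the step at the endpoint of higher level; in fact either step may be
unfolded as long as it stays within `[x, y]`. -/
theorem step_right (hρ : IsVPath a ρ) (hx : InZ x) (hy : InZ y)
    (hxy : x + (1 / 2) ^ level x ≤ y) : ρ x y = a ^ level x + ρ (x + (1 / 2) ^ level x) y := by
  rcases Nat.eq_zero_or_pos (level x) with h0 | hlx
  · simp only [h0, pow_zero] at hxy ⊢
    rcases hx.eq_zero_or_eq_one_of_level_eq_zero h0 with rfl | rfl
    · obtain rfl : y = 1 := le_antisymm hy.2.1 (by simpa using hxy)
      rw [zero_add, hρ.self, hρ.zero_one, add_zero]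
    · linarith [hy.2.1]
  induction hn : level y using Nat.strong_induction_on generalizing y with
  | _ n ih =>
  have hxy' : x < y := lt_of_lt_of_le (by simp) hxy
  rcases le_or_gt (level y) (level x) with hle | hlt
  · rw [← rnb_eq_s18 hlx]
    exact hρ.2.2.2.2.1 x y hx hy hxy' hlx hle
  set X := x + (1 / 2) ^ level x
  have hxX : x < X := by simp [X]
  have hly : 1 ≤ level y := by omega
  set Y := y - (1 / 2) ^ level y
  have hYy : Y < y := by simp [Y]
  have hX : OnGrid (level x - 1) X := (onGrid_pred_level_add_sub hx.2.2 hlx).1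
  have hXy : X < y := hxy.lt_of_ne fun h => by have := level_le_s18 (h ▸ hX); omega
  have hXY : X ≤ Y := by
    linarith [(hX.mono (by omega : level x - 1 ≤ level y)).add_half_pow_le
      (onGrid_level hy.2.2) hXy]
  have hXZ : InZ X := InZ.of_onGrid hx hy hxX.le hxy (onGrid_level hx.2.2).add_half_pow
  have hYZ : InZ Y := InZ.of_onGrid hx hy (hxX.le.trans hXY) hYy.le
    (onGrid_level hy.2.2).sub_half_pow
  have hXlt : level X < level y := by have := level_le_s18 hX; omega
  rw [hρ.2.2.2.2.2 x y hx hy hxy' hlt, hρ.2.2.2.2.2 X y hXZ hy hXy hXlt, lnb_eq_s18 hly,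
    ih (level Y) (hn ▸ level_sub_half_pow_lt hy.2.2 hly) hYZ hXY rfl]
  ring

theorem step_left (hρ : IsVPath a ρ) (hx : InZ x) (hy : InZ y)
    (hxy : x ≤ y - (1 / 2) ^ level y) : ρ x y = ρ x (y - (1 / 2) ^ level y) + a ^ level y := by
  rcases Nat.eq_zero_or_pos (level y) with h0 | hly
  · simp only [h0, pow_zero] at hxy ⊢
    rcases hy.eq_zero_or_eq_one_of_level_eq_zero h0 with rfl | rfl
    · linarith [hx.1]
    · obtain rfl : x = 0 := le_antisymm (by simpa using hxy) hx.1
      rw [sub_self, hρ.self, hρ.zero_one, zero_add]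
  induction hn : level x using Nat.strong_induction_on generalizing x with
  | _ n ih =>
  have hxy' : x < y := lt_of_le_of_lt hxy (by simp)
  rcases lt_or_ge (level x) (level y) with hlt | hle
  · rw [← lnb_eq_s18 hly]
    exact hρ.2.2.2.2.2 x y hx hy hxy' hlt
  have hlx : 1 ≤ level x := by omega
  set Y := y - (1 / 2) ^ level y
  have hYy : Y < y := by simp [Y]
  have hY : OnGrid (level y - 1) Y := (onGrid_pred_level_add_sub hy.2.2 hly).2
  have hxY : x < Y := hxy.lt_of_ne fun h => by have := level_le_s18 (h ▸ hY); omega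
  set X := x + (1 / 2) ^ level x
  have hxX : x < X := by simp [X]
  have hXY : X ≤ Y := (onGrid_level hx.2.2).add_half_pow_le (hY.mono (by omega)) hxY
  have hXZ : InZ X := InZ.of_onGrid hx hy hxX.le (hXY.trans hYy.le)
    (onGrid_level hx.2.2).add_half_pow
  have hYZ : InZ Y := InZ.of_onGrid hx hy hxY.le hYy.le (onGrid_level hy.2.2).sub_half_pow
  have hYlt : level Y < level x := by have := level_le_s18 hY; omega
  rw [hρ.2.2.2.2.1 x y hx hy hxy' hlx hle, hρ.2.2.2.2.1 x Y hx hYZ hxY hlx hYlt.le, rnb_eq_s18 hlx,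
    ih (level X) (hn ▸ level_add_half_pow_lt hx.2.2 hlx) hXZ hXY rfl]
  ring

theorem mirror (hρ : IsVPath a ρ) : IsVPath a (fun p q => ρ (1 - p) (1 - q)) := by
  refine ⟨fun x y => hρ.symm _ _, fun x => hρ.self _,
    fun x y hx hy => hρ.nonneg hx.one_sub hy.one_sub, ?_, ?_, ?_⟩
  · simpa [hρ.symm 1 0] using hρ.zero_one
  · intro x y hx hy hxy hlx hle
    have hgap := (onGrid_level hx.2.2).add_half_pow_le ((onGrid_level hy.2.2).mono hle) hxy
    have hstep := hρ.step_left hy.one_sub hx.one_sub (by rw [level_one_sub hx.2.2]; linarith)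
    rw [level_one_sub hx.2.2, show 1 - x - (1 / 2) ^ level x = 1 - rnb x by
      rw [rnb_eq_s18 hlx]; ring] at hstep
    dsimp only
    rw [hρ.symm, hstep, hρ.symm (1 - y)]
    ring
  · intro x y hx hy hxy hlt
    have hgap := ((onGrid_level hx.2.2).mono hlt.le).add_half_pow_le (onGrid_level hy.2.2) hxy
    have hstep := hρ.step_right hy.one_sub hx.one_sub (by rw [level_one_sub hy.2.2]; linarith)
    rw [level_one_sub hy.2.2, show 1 - y + (1 / 2) ^ level y = 1 - lnb y by
      rw [lnb_eq_s18 (by omega)]; ring] at hstep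
    dsimp only
    rw [hρ.symm, hstep, hρ.symm (1 - lnb y)]
    ring

/-- The right-step chain from `x` stays in the cell `(u - 2⁻ⁿ, u]` until it reaches `u`. -/
theorem split_of_sub_lt (hρ : IsVPath a ρ) (hu : OnGrid n u) (hx : InZ x) (huZ : InZ u)
    (hy : InZ y) (hux : u - (1 / 2) ^ n < x) (hxu : x ≤ u) (huy : u ≤ y) :
    ρ x y = ρ x u + ρ u y := by
  induction hk : level x using Nat.strong_induction_on generalizing x with
  | _ k ih =>
  rcases hxu.eq_or_lt with rfl | hxu
  · rw [hρ.self, zero_add]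
  have hlx : n < level x := lt_level_of_lt_of_lt hu.sub_half_pow hx.2.2 hux (by simpa using hxu)
  set X := x + (1 / 2) ^ level x
  have hxX : x < X := by simp [X]
  have hXu : X ≤ u := (onGrid_level hx.2.2).add_half_pow_le (hu.mono hlx.le) hxu
  have hXZ : InZ X := InZ.of_onGrid hx huZ hxX.le hXu (onGrid_level hx.2.2).add_half_pow
  rw [hρ.step_right hx hy (hXu.trans huy), hρ.step_right hx huZ hXu,
    ih (level X) (hk ▸ level_add_half_pow_lt hx.2.2 (by omega)) hXZ (hux.trans hxX) hXu rfl]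
  ring

theorem split_of_lt_add (hρ : IsVPath a ρ) (hu : OnGrid n u) (hx : InZ x) (huZ : InZ u)
    (hy : InZ y) (hxu : x ≤ u) (huy : u ≤ y) (hyu : y < u + (1 / 2) ^ n) :
    ρ x y = ρ x u + ρ u y := by
  have h := hρ.mirror.split_of_sub_lt hu.one_sub hy.one_sub huZ.one_sub hx.one_sub
    (by linarith) (by linarith) (by linarith)
  simp only [sub_sub_cancel] at h
  rw [hρ.symm x y, h, hρ.symm u x, hρ.symm y u, add_comm]

/-- Along the chain of right steps from `x`, the levels strictly decrease and all exceed `e`,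
so `ρ x P ≤ a^{e+1} + ⋯ + a^{level x} = (a^{e+1} - a^{level x + 1}) / (1 - a)`. -/
theorem one_sub_mul_add_pow_succ_le (hρ : IsVPath a ρ) (ha0 : 0 ≤ a) (ha1 : a ≤ 1) {e : ℕ}
    {p : ℚ} (hp : OnGrid e p) (hx : InZ x) (hP : InZ (p + (1 / 2) ^ e)) (hpx : p < x)
    (hxP : x < p + (1 / 2) ^ e) :
    (1 - a) * ρ x (p + (1 / 2) ^ e) + a ^ (level x + 1) ≤ a ^ (e + 1) := by
  induction hk : level x using Nat.strong_induction_on generalizing x with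
  | _ k ih =>
  subst hk
  have hlx : e < level x := lt_level_of_lt_of_lt hp hx.2.2 hpx hxP
  set X := x + (1 / 2) ^ level x
  have hxX : x < X := by simp [X]
  have hXP : X ≤ p + (1 / 2) ^ e :=
    (onGrid_level hx.2.2).add_half_pow_le (hp.add_half_pow.mono hlx.le) hxP
  have hstep : ρ x (p + (1 / 2) ^ e) = a ^ level x + ρ X (p + (1 / 2) ^ e) :=
    hρ.step_right hx hP hXP
  rw [hstep]
  rcases hXP.eq_or_lt with hXP | hXP
  · rw [hXP, hρ.self]
    calc (1 - a) * (a ^ level x + 0) + a ^ (level x + 1) = a ^ level x := by ring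
      _ ≤ a ^ (e + 1) := pow_le_pow_of_le_one ha0 ha1 hlx
  have hXlt := level_add_half_pow_lt hx.2.2 (by omega)
  have hXZ : InZ X := InZ.of_onGrid hx hP hxX.le hXP.le (onGrid_level hx.2.2).add_half_pow
  calc (1 - a) * (a ^ level x + ρ X (p + (1 / 2) ^ e)) + a ^ (level x + 1)
      = (1 - a) * ρ X (p + (1 / 2) ^ e) + a ^ level x := by ring
    _ ≤ (1 - a) * ρ X (p + (1 / 2) ^ e) + a ^ (level X + 1) :=
      add_le_add_right (pow_le_pow_of_le_one ha0 ha1 hXlt) _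
    _ ≤ a ^ (e + 1) := ih (level X) hXlt hXZ (hpx.trans hxX) hXP rfl

theorem le_pow_of_lt_of_lt (hρ : IsVPath a ρ) (ha0 : 0 ≤ a) (ha : a ≤ 1 / 2) {e : ℕ} {p : ℚ}
    (hp : OnGrid e p) (hx : InZ x) (hP : InZ (p + (1 / 2) ^ e)) (hpx : p < x)
    (hxP : x < p + (1 / 2) ^ e) : ρ x (p + (1 / 2) ^ e) ≤ a ^ e := by
  have h := hρ.one_sub_mul_add_pow_succ_le ha0 (by linarith) hp hx hP hpx hxP
  have hpow : a ^ (e + 1) ≤ (1 - a) * a ^ e := by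
    rw [pow_succ, mul_comm]
    exact mul_le_mul_of_nonneg_right (by linarith) (pow_nonneg ha0 e)
  refine le_of_mul_le_mul_left ?_ (by linarith : (0 : ℝ) < 1 - a)
  linarith [pow_nonneg ha0 (level x + 1)]

/-- The midpoint `c` of the cell is at distance `a^{m+1}` from both ends, and the path from `x`
to the end farther away passes through `c`; recurse into the half of the cell containing `x`. -/
theorem pow_succ_le_one_sub_mul_add (hρ : IsVPath a ρ) (ha0 : 0 ≤ a) (ha : a ≤ 1 / 2)
    {m : ℕ} {p : ℚ} (hp : OnGrid m p) (hpZ : InZ p) (hx : InZ x) (hP : InZ (p + (1 / 2) ^ m))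
    (hpx : p < x) (hxP : x < p + (1 / 2) ^ m) :
    a ^ (m + 1) ≤ (1 - a) * (ρ p x + ρ x (p + (1 / 2) ^ m)) := by
  induction hk : level x - m using Nat.strong_induction_on generalizing m p with
  | _ k ih =>
  have hlx : m < level x := lt_level_of_lt_of_lt hp hx.2.2 hpx hxP
  have hhalf : (1 / 2 : ℚ) ^ (m + 1) + (1 / 2) ^ (m + 1) = (1 / 2) ^ m := by
    rw [pow_succ]; ring
  have hpos : (0 : ℚ) < (1 / 2) ^ (m + 1) := by positivity
  set P := p + (1 / 2) ^ m
  set c := p + (1 / 2) ^ (m + 1)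
  have hc : OnGrid (m + 1) c := (hp.mono (by omega)).add_half_pow
  have hpc : p < c := by simp [c]
  have hcP : c + (1 / 2) ^ (m + 1) = P := by simp only [c, P]; linarith
  have hcZ : InZ c := InZ.of_onGrid hpZ hP hpc.le (by linarith) hc
  have hlc : level c = m + 1 :=
    le_antisymm (level_le_s18 hc) (lt_level_of_lt_of_lt hp hcZ.2.2 hpc (by linarith))
  have hpc_dist : ρ p c = a ^ (m + 1) := by
    have hcp : c - (1 / 2) ^ (m + 1) = p := by simp [c]
    rw [hρ.step_left hpZ hcZ (by rw [hlc, hcp]), hlc, hcp, hρ.self, zero_add]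
  have hcP_dist : ρ c P = a ^ (m + 1) := by
    rw [hρ.step_right hcZ hP (by rw [hlc, hcP]), hlc, hcP, hρ.self, add_zero]
  have hsplit : a ^ (m + 1) = a ^ (m + 1 + 1) + (1 - a) * a ^ (m + 1) := by ring
  rcases lt_trichotomy x c with hxc | rfl | hcx
  · have hx' := ih (level x - (m + 1)) (by omega) (hp.mono (by omega)) hpZ hcZ hpx hxc rfl
    rw [hρ.split_of_sub_lt hc hx hcZ hP (by simpa [c] using hpx) hxc.le (by linarith),
      hcP_dist]
    linarith
  · rw [hpc_dist, hcP_dist]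
    nlinarith [pow_nonneg ha0 (m + 1)]
  · have hx' := ih (level x - (m + 1)) (by omega) hc hcZ (by rwa [hcP]) hcx (by rwa [hcP]) rfl
    rw [hcP] at hx'
    rw [hρ.split_of_lt_add hc hpZ hcZ hx hpc.le hcx.le (by rwa [hcP]), hpc_dist]
    linarith

theorem anti_left_of_sub_lt (hρ : IsVPath a ρ) (ha0 : 0 ≤ a) (ha : a ≤ 1 / 2) (hw : OnGrid n w)
    (hz : InZ z) (hx : InZ x) (hwZ : InZ w) (hwz : w - (1 / 2) ^ n < z) (hzx : z ≤ x)
    (hxw : x ≤ w) : ρ x w ≤ ρ z w := by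
  induction hk : level z using Nat.strong_induction_on generalizing z with
  | _ k ih =>
  rcases hzx.eq_or_lt with rfl | hzx
  · exact le_rfl
  rcases hxw.eq_or_lt with rfl | hxw
  · rw [hρ.self]
    exact hρ.nonneg hz hx
  have hlz : n < level z :=
    lt_level_of_lt_of_lt hw.sub_half_pow hz.2.2 hwz (by simpa using hzx.trans hxw)
  set Z := z + (1 / 2) ^ level z
  have hzZ : z < Z := by simp [Z]
  have hZw : Z ≤ w := (onGrid_level hz.2.2).add_half_pow_le (hw.mono hlz.le) (hzx.trans hxw)
  have hZZ : InZ Z := InZ.of_onGrid hz hwZ hzZ.le hZw (onGrid_level hz.2.2).add_half_pow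
  have hstep : ρ z w = a ^ level z + ρ Z w := hρ.step_right hz hwZ hZw
  rw [hstep]
  have hpow := pow_nonneg ha0 (level z)
  rcases le_or_gt Z x with hZx | hxZ
  · linarith [ih (level Z) (hk ▸ level_add_half_pow_lt hz.2.2 (by omega)) hZZ
      (hwz.trans hzZ) hZx rfl]
  · rw [hρ.split_of_sub_lt (onGrid_level hz.2.2).add_half_pow hx hZZ hwZ
      (by simpa [Z] using hzx) hxZ.le hZw]
    linarith [hρ.le_pow_of_lt_of_lt ha0 ha (onGrid_level hz.2.2) hx hZZ hzx hxZ]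

theorem anti_left_of_lt_add (hρ : IsVPath a ρ) (ha0 : 0 ≤ a) (ha : a ≤ 1 / 2) (hw : OnGrid n w)
    (hwZ : InZ w) (hx : InZ x) (hy : InZ y) (hwx : w ≤ x) (hxy : x ≤ y)
    (hyw : y < w + (1 / 2) ^ n) : ρ x y ≤ ρ w y := by
  induction hk : level y using Nat.strong_induction_on generalizing y with
  | _ k ih =>
  rcases hxy.eq_or_lt with rfl | hxy
  · rw [hρ.self]
    exact hρ.nonneg hwZ hx
  have hly : n < level y := lt_level_of_lt_of_lt hw hy.2.2 (hwx.trans_lt hxy) hyw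
  set Y := y - (1 / 2) ^ level y
  have hYy : Y < y := by simp [Y]
  have hwY : w ≤ Y := by
    linarith [(hw.mono hly.le).add_half_pow_le (onGrid_level hy.2.2) (hwx.trans_lt hxy)]
  have hYZ : InZ Y := InZ.of_onGrid hwZ hy hwY hYy.le (onGrid_level hy.2.2).sub_half_pow
  have hstep : ρ w y = ρ w Y + a ^ level y := hρ.step_left hwZ hy hwY
  rw [hstep]
  rcases le_or_gt x Y with hxY | hYx
  · have hstep' : ρ x y = ρ x Y + a ^ level y := hρ.step_left hx hy hxY
    rw [hstep']
    linarith [ih (level Y) (hk ▸ level_sub_half_pow_lt hy.2.2 (by omega)) hYZ hxY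
      (hYy.trans hyw) rfl]
  · have hYy' : Y + (1 / 2) ^ level y = y := by simp [Y]
    have h := hρ.le_pow_of_lt_of_lt ha0 ha (onGrid_level hy.2.2).sub_half_pow hx
      (by rwa [hYy']) hYx (by rwa [hYy'])
    rw [hYy'] at h
    linarith [hρ.nonneg hwZ hYZ]

theorem anti_left (hρ : IsVPath a ρ) (ha0 : 0 ≤ a) (ha : a ≤ 1 / 2) (hz : InZ z) (hx : InZ x)
    (hy : InZ y) (hzx : z ≤ x) (hxy : x ≤ y) : ρ x y ≤ ρ z y := by
  by_cases h01 : z = 0 ∧ y = 1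
  · obtain ⟨rfl, rfl⟩ := h01
    rw [hρ.zero_one]
    rcases hzx.eq_or_lt with rfl | hzx
    · rw [hρ.zero_one]
    rcases hxy.eq_or_lt with rfl | hxy
    · rw [hρ.self]
      exact zero_le_one
    simpa using hρ.le_pow_of_lt_of_lt ha0 ha (OnGrid.zero 0) hx (by simpa using InZ.one) hzx
      (by simpa using hxy)
  have hzy : 0 < z ∨ y < 1 := by
    by_contra! h
    exact h01 ⟨le_antisymm h.1 hz.1, le_antisymm hy.2.1 h.2⟩
  obtain ⟨w, hw⟩ := exists_isApex hz (hzx.trans hxy)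
  obtain ⟨hwz, hyw⟩ := hw.sub_lt_and_lt_add hz hy hzy
  obtain ⟨hwZ, hzw, hwy, -⟩ := hw
  have hw := onGrid_level hwZ.2.2
  rw [hρ.split_of_sub_lt hw hz hwZ hy hwz hzw hwy]
  rcases le_or_gt x w with hxw | hwx
  · rw [hρ.split_of_sub_lt hw hx hwZ hy (hwz.trans_le hzx) hxw hwy]
    linarith [hρ.anti_left_of_sub_lt ha0 ha hw hz hx hwZ hwz hzx hxw]
  · linarith [hρ.nonneg hz hwZ, hρ.anti_left_of_lt_add ha0 ha hw hwZ hx hy hwx.le hxy hyw]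

theorem mono_right (hρ : IsVPath a ρ) (ha0 : 0 ≤ a) (ha : a ≤ 1 / 2) (hx : InZ x) (hy : InZ y)
    (hz : InZ z) (hxy : x ≤ y) (hyz : y ≤ z) : ρ x y ≤ ρ x z := by
  have h := hρ.mirror.anti_left ha0 ha hz.one_sub hy.one_sub hx.one_sub (by linarith)
    (by linarith)
  simp only [sub_sub_cancel] at h
  rwa [hρ.symm x y, hρ.symm x z]

/-- Here `u` is the apex of `[z, z']` and the next grid point `U = u + 2^{-level u}` lies in
`(z', z'']`: the path from `z` to `z''` climbs through `u` and `U`, and the only edge `u U` it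
does not share with the two shorter paths is paid for by their detour through `z'`. -/
theorem relaxed_triangle_of_left_apex (hρ : IsVPath a ρ) (ha0 : 0 ≤ a) (ha : a ≤ 1 / 2)
    (hz : InZ z) (hz' : InZ z') (hz'' : InZ z'') (hu : InZ u) (h₁ : u - (1 / 2) ^ level u < z)
    (h₂ : z ≤ u) (h₃ : u < z') (h₄ : z' < u + (1 / 2) ^ level u)
    (h₅ : u + (1 / 2) ^ level u ≤ z'') :
    a * ρ z z'' ≤ (1 - a) * (ρ z z' + ρ z' z'') := by
  set U := u + (1 / 2) ^ level u
  have hgrid := onGrid_level hu.2.2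
  have hUZ : InZ U := InZ.of_onGrid hu hz'' (by simp [U]) h₅ hgrid.add_half_pow
  have hstep : ρ u z'' = a ^ level u + ρ U z'' := hρ.step_right hu hz'' h₅
  rw [hρ.split_of_sub_lt hgrid hz hu hz'' h₁ h₂ (h₃.le.trans (h₄.le.trans h₅)), hstep,
    hρ.split_of_sub_lt hgrid hz hu hz' h₁ h₂ h₃.le,
    hρ.split_of_sub_lt hgrid.add_half_pow hz' hUZ hz'' (by simpa [U] using h₃) h₄.le h₅]
  have hcell := hρ.pow_succ_le_one_sub_mul_add ha0 ha hgrid hu hz' hUZ h₃ h₄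
  have hzu : a * ρ z u ≤ (1 - a) * ρ z u :=
    mul_le_mul_of_nonneg_right (by linarith) (hρ.nonneg hz hu)
  have hUz'' : a * ρ U z'' ≤ (1 - a) * ρ U z'' :=
    mul_le_mul_of_nonneg_right (by linarith) (hρ.nonneg hUZ hz'')
  rw [pow_succ] at hcell
  linarith

theorem relaxed_triangle_of_right_apex (hρ : IsVPath a ρ) (ha0 : 0 ≤ a) (ha : a ≤ 1 / 2)
    (hz : InZ z) (hz' : InZ z') (hz'' : InZ z'') (hv : InZ v)
    (h₁ : z ≤ v - (1 / 2) ^ level v) (h₂ : v - (1 / 2) ^ level v < z') (h₃ : z' < v)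
    (h₄ : v ≤ z'') (h₅ : z'' < v + (1 / 2) ^ level v) :
    a * ρ z z'' ≤ (1 - a) * (ρ z z' + ρ z' z'') := by
  have h := hρ.mirror.relaxed_triangle_of_left_apex ha0 ha hz''.one_sub hz'.one_sub hz.one_sub
    hv.one_sub (by rw [level_one_sub hv.2.2]; linarith) (by linarith) (by linarith)
    (by rw [level_one_sub hv.2.2]; linarith) (by rw [level_one_sub hv.2.2]; linarith)
  simp only [sub_sub_cancel] at h
  rw [hρ.symm z z'', hρ.symm z z', hρ.symm z' z'']
  linarith

theorem relaxed_triangle_of_le (hρ : IsVPath a ρ) (ha0 : 0 ≤ a) (ha : a ≤ 1 / 2) (hz : InZ z)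
    (hz' : InZ z') (hz'' : InZ z'') (hzz'' : z ≤ z'') :
    a * ρ z z'' ≤ (1 - a) * (ρ z z' + ρ z' z'') := by
  have of_le_add (h : ρ z z'' ≤ ρ z z' + ρ z' z'') :
      a * ρ z z'' ≤ (1 - a) * (ρ z z' + ρ z' z'') :=
    calc a * ρ z z'' ≤ a * (ρ z z' + ρ z' z'') := mul_le_mul_of_nonneg_left h ha0
      _ ≤ (1 - a) * (ρ z z' + ρ z' z'') := mul_le_mul_of_nonneg_right (by linarith)
        (add_nonneg (hρ.nonneg hz hz') (hρ.nonneg hz' hz''))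
  rcases le_or_gt z' z with hz'z | hzz'
  · exact of_le_add (by linarith [hρ.anti_left ha0 ha hz' hz hz'' hz'z hzz'', hρ.nonneg hz hz'])
  rcases le_or_gt z'' z' with hz''z' | hz'z''
  · exact of_le_add
      (by linarith [hρ.mono_right ha0 ha hz hz'' hz' hzz'' hz''z', hρ.nonneg hz' hz''])
  obtain ⟨u, hu⟩ := exists_isApex hz hzz'.le
  obtain ⟨v, hv⟩ := exists_isApex hz' hz'z''.le
  obtain ⟨hu₁, hu₂⟩ := hu.sub_lt_and_lt_add hz hz' (.inr (hz'z''.trans_le hz''.2.1))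
  obtain ⟨hv₁, hv₂⟩ := hv.sub_lt_and_lt_add hz' hz'' (.inl (hz.1.trans_lt hzz'))
  obtain ⟨huZ, hzu, huz', -⟩ := hu
  obtain ⟨hvZ, hz'v, hvz'', -⟩ := hv
  rcases huz'.eq_or_lt with rfl | huz'
  · exact of_le_add (hρ.split_of_sub_lt (onGrid_level huZ.2.2) hz huZ hz'' hu₁ hzu hz'z''.le).le
  rcases hz'v.eq_or_lt with rfl | hz'v
  · exact of_le_add (hρ.split_of_lt_add (onGrid_level hvZ.2.2) hz hvZ hz'' hzz'.le hvz'' hv₂).le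
  by_cases hA : u + (1 / 2) ^ level u ≤ z''
  · exact hρ.relaxed_triangle_of_left_apex ha0 ha hz hz' hz'' huZ hu₁ hzu huz' hu₂ hA
  by_cases hB : z ≤ v - (1 / 2) ^ level v
  · exact hρ.relaxed_triangle_of_right_apex ha0 ha hz hz' hz'' hvZ hB hv₁ hz'v hvz'' hv₂
  -- otherwise each of `u`, `v` lies strictly inside the other's grid cell
  rw [not_le] at hA hB
  have := lt_level_of_lt_of_lt (onGrid_level huZ.2.2) hvZ.2.2 (huz'.trans hz'v)
    (hvz''.trans_lt hA)
  have := lt_level_of_lt_of_lt (onGrid_level hvZ.2.2).sub_half_pow huZ.2.2 (hB.trans_le hzu)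
    (by simpa using huz'.trans hz'v)
  omega

theorem relaxed_triangle (hρ : IsVPath a ρ) (ha0 : 0 ≤ a) (ha : a ≤ 1 / 2) (hz : InZ z)
    (hz' : InZ z') (hz'' : InZ z'') : a * ρ z z'' ≤ (1 - a) * (ρ z z' + ρ z' z'') := by
  rcases le_total z z'' with h | h
  · exact hρ.relaxed_triangle_of_le ha0 ha hz hz' hz'' h
  · have h' := hρ.relaxed_triangle_of_le ha0 ha hz'' hz' hz h
    rw [hρ.symm z'' z, hρ.symm z'' z', hρ.symm z' z] at h'
    linarith

end IsVPath

/-- The V-path quasi-metric with parameter `a ∈ (0,1/2)` is a `K`-quasi-metric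
with `K = 2(1-a)/a`. -/
theorem vpath_is_quasimetric (a : ℝ) (ha0 : 0 < a) (ha : a < 1 / 2)
    (ρ : ℚ → ℚ → ℝ) (hρ : IsVPath a ρ) :
    ∀ z z' z'' : ℚ, InZ z → InZ z' → InZ z'' →
      ρ z z'' ≤ (2 * (1 - a) / a) * max (ρ z z') (ρ z' z'') := by
  intro z z' z'' hz hz' hz''
  have hsum : ρ z z' + ρ z' z'' ≤ 2 * max (ρ z z') (ρ z' z'') := by
    linarith [le_max_left (ρ z z') (ρ z' z''), le_max_right (ρ z z') (ρ z' z'')]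
  rw [div_mul_eq_mul_div, le_div_iff₀ ha0]
  calc ρ z z'' * a = a * ρ z z'' := mul_comm _ _
    _ ≤ (1 - a) * (ρ z z' + ρ z' z'') := hρ.relaxed_triangle ha0.le ha.le hz hz' hz''
    _ ≤ (1 - a) * (2 * max (ρ z z') (ρ z' z'')) :=
      mul_le_mul_of_nonneg_left hsum (by linarith)
    _ = 2 * (1 - a) * max (ρ z z') (ρ z' z'') := by ring
end
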